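/- arXiv:2110.02813 — 3 statements merged into one kernel-verified Lean document; each statement's English description precedes it below -/
import Mathlib

section
/- If f : ℝⁿ → ℝ is convex and differentiable with L-Lipschitz gradient (L > 0), and gradient descent with fixed step size t ≤ 1/L is run for k iterations from u⁰, producing iterates uᵏ⁺¹ = uᵏ − t∇f(uᵏ), then f(uᵏ) − f(u*) ≤ ‖u⁰ − u*‖²/(2tk), where u* is any minimizer of f. -/
/-!
A gradient-Lipschitz function lies below its quadratic model `f x + ⟪∇f x, y - x⟫ + L/2 ‖y - x‖²`,
so for `t ≤ 1/L` each step lowers `f` by at least `t/2 ‖∇f‖²`. Adding the first-order convexity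
inequality at the current iterate and completing the square gives
`f (uᵢ₊₁) - f z ≤ (‖uᵢ - z‖² - ‖uᵢ₊₁ - z‖²) / (2t)` for every point `z`. Summing over `i < k`
telescopes, and since `f (uᵢ)` decreases, the sum dominates `k (f (uₖ) - f z)`.
-/

open RealInnerProductSpace

section GradientInequalities

variable {F : Type*} [NormedAddCommGroup F] [InnerProductSpace ℝ F] [CompleteSpace F]
  {f : F → ℝ} {g x y : F}

open AffineMap in
theorem HasGradientAt.hasDerivAt_comp_lineMap {s : ℝ} (hf : HasGradientAt f g (lineMap x y s)) :
    HasDerivAt (f ∘ lineMap x y) ⟪g, y - x⟫ s := by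
  simpa using hf.hasFDerivAt.comp_hasDerivAt s hasDerivAt_lineMap

open AffineMap in
theorem ConvexOn.add_inner_gradient_le (hconv : ConvexOn ℝ Set.univ f)
    (hf : DifferentiableAt ℝ f x) (y : F) :
    f x + ⟪gradient f x, y - x⟫ ≤ f y := by
  have hline : ConvexOn ℝ Set.univ (f ∘ lineMap x y) := hconv.comp_affineMap (lineMap x y)
  have hderiv : HasDerivAt (f ∘ lineMap x y) ⟪gradient f x, y - x⟫ (0 : ℝ) :=
    HasGradientAt.hasDerivAt_comp_lineMap (by simpa using hf.hasGradientAt)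
  have := hline.le_slope_of_hasDerivAt (Set.mem_univ 0) (Set.mem_univ 1) zero_lt_one hderiv
  simp only [slope_def_field, Function.comp_apply, lineMap_apply_zero, lineMap_apply_one,
    sub_zero, div_one] at this
  linarith

open AffineMap in
theorem le_add_inner_gradient_add_sq_of_gradient_lipschitz {L : ℝ} (hf : Differentiable ℝ f)
    (hlip : ∀ x y, ‖gradient f x - gradient f y‖ ≤ L * ‖x - y‖) (x y : F) :
    f y ≤ f x + ⟪gradient f x, y - x⟫ + L / 2 * ‖y - x‖ ^ 2 := by
  set c := ⟪gradient f x, y - x⟫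
  -- `f` on the segment minus its quadratic model; the Lipschitz bound makes it antitone.
  set h : ℝ → ℝ := fun s => f (lineMap x y s) - s * c - L / 2 * s ^ 2 * ‖y - x‖ ^ 2
  have hderiv (s : ℝ) : HasDerivAt h
      (⟪gradient f (lineMap x y s), y - x⟫ - c - L * s * ‖y - x‖ ^ 2) s := by
    have hquad := ((hasDerivAt_pow 2 s).const_mul (L / 2)).mul_const (‖y - x‖ ^ 2)
    refine ((((hf _).hasGradientAt.hasDerivAt_comp_lineMap).sub
      ((hasDerivAt_id s).mul_const c)).sub hquad).congr_deriv ?_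
    push_cast
    ring
  have hderiv_nonpos (s : ℝ) (hs : s ∈ interior (Set.Icc (0 : ℝ) 1)) : deriv h s ≤ 0 := by
    rw [interior_Icc] at hs
    have hgrad : ⟪gradient f (lineMap x y s) - gradient f x, y - x⟫ ≤ L * s * ‖y - x‖ ^ 2 :=
      calc _ ≤ ‖gradient f (lineMap x y s) - gradient f x‖ * ‖y - x‖ := real_inner_le_norm _ _
        _ ≤ L * ‖lineMap x y s - x‖ * ‖y - x‖ := by gcongr; exact hlip _ _
        _ = L * s * ‖y - x‖ ^ 2 := by
          rw [← vsub_eq_sub, lineMap_vsub_left, vsub_eq_sub, norm_smul, Real.norm_of_nonneg hs.1.le]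
          ring
    rw [inner_sub_left] at hgrad
    rw [(hderiv s).deriv]
    linarith
  have hanti := antitoneOn_of_deriv_nonpos (convex_Icc 0 1)
    (fun s _ => (hderiv s).continuousAt.continuousWithinAt)
    (fun s _ => (hderiv s).differentiableAt.differentiableWithinAt) hderiv_nonpos
  have := hanti (Set.left_mem_Icc.mpr zero_le_one) (Set.right_mem_Icc.mpr zero_le_one) zero_le_one
  simp only [h, lineMap_apply_zero, lineMap_apply_one] at this
  linarith

theorem apply_sub_smul_gradient_le {L t : ℝ} (hf : Differentiable ℝ f)
    (hlip : ∀ x y, ‖gradient f x - gradient f y‖ ≤ L * ‖x - y‖) (ht : 0 ≤ t) (htL : t * L ≤ 1)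
    (x : F) : f (x - t • gradient f x) ≤ f x - t / 2 * ‖gradient f x‖ ^ 2 := by
  have hquad := le_add_inner_gradient_add_sq_of_gradient_lipschitz hf hlip x (x - t • gradient f x)
  rw [sub_sub_cancel_left, inner_neg_right, real_inner_smul_right, real_inner_self_eq_norm_sq,
    norm_neg, norm_smul, Real.norm_of_nonneg ht] at hquad
  have hstep_small : t * L * (t * ‖gradient f x‖ ^ 2) ≤ t * ‖gradient f x‖ ^ 2 :=
    mul_le_of_le_one_left (by positivity) htL
  linarith

theorem apply_sub_smul_gradient_sub_le {L t : ℝ} (hconv : ConvexOn ℝ Set.univ f)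
    (hf : Differentiable ℝ f) (hlip : ∀ x y, ‖gradient f x - gradient f y‖ ≤ L * ‖x - y‖)
    (ht : 0 < t) (htL : t * L ≤ 1) (x z : F) :
    f (x - t • gradient f x) - f z ≤ (‖x - z‖ ^ 2 - ‖x - t • gradient f x - z‖ ^ 2) / (2 * t) := by
  have hconv_x := hconv.add_inner_gradient_le (hf x) z
  have hdecrease := apply_sub_smul_gradient_le hf hlip ht.le htL x
  have hinner : ⟪gradient f x, z - x⟫ = -⟪gradient f x, x - z⟫ := by
    rw [← inner_neg_right, neg_sub]
  have hexpand : ‖x - t • gradient f x - z‖ ^ 2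
      = ‖x - z‖ ^ 2 - 2 * t * ⟪gradient f x, x - z⟫ + t ^ 2 * ‖gradient f x‖ ^ 2 := by
    rw [sub_right_comm, norm_sub_sq_real, real_inner_smul_right, norm_smul, mul_pow,
      Real.norm_of_nonneg ht.le, real_inner_comm]
    ring
  calc f (x - t • gradient f x) - f z
      ≤ ⟪gradient f x, x - z⟫ - t / 2 * ‖gradient f x‖ ^ 2 := by linarith
    _ = (‖x - z‖ ^ 2 - ‖x - t • gradient f x - z‖ ^ 2) / (2 * t) := by
      rw [hexpand]
      field_simp
      ring

end GradientInequalities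

theorem nat_mul_le_of_antitone_of_le_sub_succ {a b : ℕ → ℝ} (ha : Antitone a)
    (hab : ∀ i, a (i + 1) ≤ b i - b (i + 1)) (k : ℕ) (hb : 0 ≤ b k) : k * a k ≤ b 0 :=
  calc k * a k = ∑ _i ∈ Finset.range k, a k := by simp
    _ ≤ ∑ i ∈ Finset.range k, a (i + 1) :=
      Finset.sum_le_sum fun i hi => ha (Finset.mem_range.mp hi)
    _ ≤ ∑ i ∈ Finset.range k, (b i - b (i + 1)) := Finset.sum_le_sum fun i _ => hab i
    _ = b 0 - b k := Finset.sum_range_sub' b k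
    _ ≤ b 0 := sub_le_self _ hb

theorem gradient_descent_convergence_general {n : ℕ}
    (f : EuclideanSpace ℝ (Fin n) → ℝ) (L t : ℝ)
    (hL : 0 < L) (hconv : ConvexOn ℝ Set.univ f) (hdiff : Differentiable ℝ f)
    (hlip : ∀ x y, ‖gradient f x - gradient f y‖ ≤ L * ‖x - y‖)
    (ht : 0 < t) (ht' : t ≤ 1 / L)
    (u : ℕ → EuclideanSpace ℝ (Fin n))
    (hstep : ∀ k, u (k + 1) = u k - t • gradient f (u k))
    (ustar : EuclideanSpace ℝ (Fin n))
    (k : ℕ) (hk : 0 < k) :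
    f (u k) - f ustar ≤ ‖u 0 - ustar‖ ^ 2 / (2 * t * k) := by
  have htL : t * L ≤ 1 := by rwa [le_div_iff₀ hL] at ht'
  have hanti : Antitone fun i => f (u i) - f ustar := by
    refine antitone_nat_of_succ_le fun i => ?_
    have := apply_sub_smul_gradient_le hdiff hlip ht.le htL (u i)
    rw [hstep]
    linarith [show 0 ≤ t / 2 * ‖gradient f (u i)‖ ^ 2 by positivity]
  have hsum := nat_mul_le_of_antitone_of_le_sub_succ hanti
    (b := fun i => ‖u i - ustar‖ ^ 2 / (2 * t))
    (fun i => by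
      rw [hstep, ← sub_div]
      exact apply_sub_smul_gradient_sub_le hconv hdiff hlip ht htL (u i) ustar)
    k (by positivity)
  rw [← div_div, le_div_iff₀ (by positivity), mul_comm]
  exact hsum

theorem gradient_descent_convergence {n : ℕ}
    (f : EuclideanSpace ℝ (Fin n) → ℝ) (L t : ℝ)
    (hL : 0 < L) (hconv : ConvexOn ℝ Set.univ f) (hdiff : Differentiable ℝ f)
    (hlip : ∀ x y, ‖gradient f x - gradient f y‖ ≤ L * ‖x - y‖)
    (ht : 0 < t) (ht' : t ≤ 1 / L)
    (u : ℕ → EuclideanSpace ℝ (Fin n))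
    (hstep : ∀ k, u (k + 1) = u k - t • gradient f (u k))
    (ustar : EuclideanSpace ℝ (Fin n)) (hmin : ∀ v, f ustar ≤ f v)
    (k : ℕ) (hk : 0 < k) :
    f (u k) - f ustar ≤ ‖u 0 - ustar‖ ^ 2 / (2 * t * k) :=
  gradient_descent_convergence_general f L t hL hconv hdiff hlip ht ht' u hstep ustar k hk
end

section
/- If f : ℝⁿ → ℝ is μ-strongly convex and differentiable with L-Lipschitz gradient, then for any step size 0 < t ≤ 1/L, one gradient descent step uᵏ⁺¹ = uᵏ − t∇f(uᵏ) satisfies ‖uᵏ⁺¹ − u*‖² ≤ (1 − tμ)‖uᵏ − u*‖², where u* is the unique minimizer of f. -/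
/-!
A step of length `1 / L` from `u` lowers `f` by at least `‖∇f u‖² / (2L)` (descent lemma), so
minimality of `u*` gives `‖∇f u‖² ≤ 2L (f u - f u*)`. Strong convexity between `u` and `u*` bounds
`f u - f u*` by `⟪∇f u, u - u*⟫ - μ/2 ‖u - u*‖²`. Expanding `‖u - t ∇f u - u*‖²`, the quadratic term
`t² ‖∇f u‖² ≤ 2t (f u - f u*)` (as `tL ≤ 1`) is absorbed by the cross term, leaving the factor `1 - tμ`.
-/

open RealInnerProductSpace

section GradientDescent

variable {E : Type*} [NormedAddCommGroup E] [InnerProductSpace ℝ E]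

theorem norm_sub_smul_sub_sq (u g v : E) (t : ℝ) :
    ‖u - t • g - v‖ ^ 2 = ‖u - v‖ ^ 2 - 2 * t * ⟪g, u - v⟫ + t ^ 2 * ‖g‖ ^ 2 := by
  rw [sub_right_comm, norm_sub_sq_real, real_inner_smul_right, norm_smul, mul_pow,
    Real.norm_eq_abs, sq_abs, real_inner_comm]
  ring

variable [CompleteSpace E] {f : E → ℝ} {L : ℝ}

theorem hasDerivAt_comp_add_smul {x w : E} {s : ℝ} (hf : DifferentiableAt ℝ f (x + s • w)) :
    HasDerivAt (fun s : ℝ => f (x + s • w)) ⟪gradient f (x + s • w), w⟫ s := by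
  have hline : HasDerivAt (fun s : ℝ => x + s • w) w s := by
    simpa using ((hasDerivAt_id s).smul_const w).const_add x
  simpa [InnerProductSpace.toDual_apply_apply, Function.comp_def] using
    hf.hasGradientAt.hasFDerivAt.comp_hasDerivAt s hline

theorem descent_lemma (hf : Differentiable ℝ f)
    (hlip : ∀ x y, ‖gradient f x - gradient f y‖ ≤ L * ‖x - y‖) (x w : E) :
    f (x + w) ≤ f x + ⟪gradient f x, w⟫ + L / 2 * ‖w‖ ^ 2 := by
  set φ : ℝ → ℝ := fun s => f (x + s • w) - s * ⟪gradient f x, w⟫ - L / 2 * s ^ 2 * ‖w‖ ^ 2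
    with hφ
  have hφ' : ∀ s : ℝ, HasDerivAt φ
      (⟪gradient f (x + s • w) - gradient f x, w⟫ - L * s * ‖w‖ ^ 2) s := by
    intro s
    have hquad := ((hasDerivAt_pow 2 s).const_mul (L / 2)).mul_const (‖w‖ ^ 2)
    refine (((hasDerivAt_comp_add_smul (hf _)).sub
      ((hasDerivAt_id s).mul_const ⟪gradient f x, w⟫)).sub hquad).congr_deriv ?_
    rw [inner_sub_left]
    push_cast
    ring
  have hgrowth : ∀ s ∈ Set.Ioo (0 : ℝ) 1,
      ⟪gradient f (x + s • w) - gradient f x, w⟫ ≤ L * s * ‖w‖ ^ 2 := fun s hs =>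
    calc ⟪gradient f (x + s • w) - gradient f x, w⟫
        ≤ ‖gradient f (x + s • w) - gradient f x‖ * ‖w‖ := real_inner_le_norm _ _
      _ ≤ L * ‖x + s • w - x‖ * ‖w‖ := by gcongr; exact hlip _ _
      _ = L * s * ‖w‖ ^ 2 := by
        rw [add_sub_cancel_left, norm_smul, Real.norm_of_nonneg hs.1.le]
        ring
  have hanti : AntitoneOn φ (Set.Icc 0 1) := by
    refine antitoneOn_of_deriv_nonpos (convex_Icc 0 1)
      (fun s _ => (hφ' s).continuousAt.continuousWithinAt)
      (fun s _ => (hφ' s).differentiableAt.differentiableWithinAt) fun s hs => ?_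
    rw [interior_Icc] at hs
    rw [(hφ' s).deriv]
    linarith [hgrowth s hs]
  have hφ10 : φ 1 ≤ φ 0 :=
    hanti (Set.left_mem_Icc.2 zero_le_one) (Set.right_mem_Icc.2 zero_le_one) zero_le_one
  simp only [hφ, zero_smul, add_zero, one_smul, zero_mul, one_pow, mul_one, ne_eq,
    OfNat.ofNat_ne_zero, not_false_eq_true, zero_pow, mul_zero, sub_zero] at hφ10
  linarith

theorem sq_norm_gradient_le_of_forall_le (hf : Differentiable ℝ f)
    (hlip : ∀ x y, ‖gradient f x - gradient f y‖ ≤ L * ‖x - y‖) (hL : 0 < L) {v : E}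
    (hmin : ∀ w, f v ≤ f w) (u : E) :
    ‖gradient f u‖ ^ 2 ≤ 2 * L * (f u - f v) := by
  set g := gradient f u
  have hstep := descent_lemma hf hlip u (-(1 / L) • g)
  rw [inner_smul_right, real_inner_self_eq_norm_sq, norm_smul, norm_neg,
    Real.norm_of_nonneg (by positivity)] at hstep
  have hdecrease : f v ≤ f u - ‖g‖ ^ 2 / (2 * L) :=
    calc f v ≤ f (u + -(1 / L) • g) := hmin _
      _ ≤ _ := hstep
      _ = f u - ‖g‖ ^ 2 / (2 * L) := by field_simp; ring
  exact (div_le_iff₀' (by positivity)).mp (by linarith)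

end GradientDescent

theorem gradient_descent_strongly_convex_contraction_general {n : ℕ}
    (f : EuclideanSpace ℝ (Fin n) → ℝ) (L μ t : ℝ)
    (hdiff : Differentiable ℝ f)
    (hsc : ∀ u v, f v ≥ f u + ⟪gradient f u, v - u⟫ + μ / 2 * ‖v - u‖ ^ 2)
    (hlip : ∀ x y, ‖gradient f x - gradient f y‖ ≤ L * ‖x - y‖)
    (ht : 0 < t) (ht' : t ≤ 1 / L)
    (ustar : EuclideanSpace ℝ (Fin n)) (hmin : ∀ v, f ustar ≤ f v)
    (u : EuclideanSpace ℝ (Fin n)) :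
    ‖u - t • gradient f u - ustar‖ ^ 2 ≤ (1 - t * μ) * ‖u - ustar‖ ^ 2 := by
  have hL : 0 < L := one_div_pos.mp (ht.trans_le ht')
  have htL : t * L ≤ 1 := (le_div_iff₀ hL).mp ht'
  have hgrad := sq_norm_gradient_le_of_forall_le hdiff hlip hL hmin u
  have hgap : 0 ≤ f u - f ustar := sub_nonneg.mpr (hmin u)
  have hconvex : 2 * (f u - f ustar) + μ * ‖u - ustar‖ ^ 2 ≤ 2 * ⟪gradient f u, u - ustar⟫ := by
    have := hsc u ustar
    rw [← neg_sub u ustar, inner_neg_right, norm_neg] at this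
    linarith
  have hquad : t ^ 2 * ‖gradient f u‖ ^ 2 ≤ 2 * t * (f u - f ustar) :=
    calc t ^ 2 * ‖gradient f u‖ ^ 2
        ≤ t ^ 2 * (2 * L * (f u - f ustar)) := by gcongr
      _ = 2 * t * (t * L) * (f u - f ustar) := by ring
      _ ≤ 2 * t * 1 * (f u - f ustar) := by gcongr
      _ = 2 * t * (f u - f ustar) := by ring
  rw [norm_sub_smul_sub_sq]
  linarith [mul_le_mul_of_nonneg_left hconvex ht.le]

theorem gradient_descent_strongly_convex_contraction {n : ℕ}
    (f : EuclideanSpace ℝ (Fin n) → ℝ) (L μ t : ℝ)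
    (hμ : 0 < μ) (hμL : μ ≤ L) (hdiff : Differentiable ℝ f)
    (hsc : ∀ u v, f v ≥ f u + ⟪gradient f u, v - u⟫ + μ / 2 * ‖v - u‖ ^ 2)
    (hlip : ∀ x y, ‖gradient f x - gradient f y‖ ≤ L * ‖x - y‖)
    (ht : 0 < t) (ht' : t ≤ 1 / L)
    (ustar : EuclideanSpace ℝ (Fin n)) (hmin : ∀ v, f ustar ≤ f v)
    (u : EuclideanSpace ℝ (Fin n)) :
    ‖u - t • gradient f u - ustar‖ ^ 2 ≤ (1 - t * μ) * ‖u - ustar‖ ^ 2 :=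
  gradient_descent_strongly_convex_contraction_general f L μ t hdiff hsc hlip ht ht' ustar hmin u
end

section
/- If f = g + h where g : ℝⁿ → ℝ is convex and differentiable with L-Lipschitz gradient and h : ℝⁿ → ℝ ∪ {+∞} is convex, then the proximal gradient iterates u^{k+1} = prox_{h,t}(u^k − t∇g(u^k)) with fixed step size t ≤ 1/L satisfy f(u^k) − f(u*) ≤ ‖u⁰ − u*‖²/(2tk), where u* minimizes f. -/
open RealInnerProductSpace

/-! Write `F = g + h`. Each step satisfies the three-point inequality
`F (u (j+1)) ≤ F z + (‖u j - z‖² - ‖u (j+1) - z‖²) / (2t)` for every `z` with `h z < ⊤`: add the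
first-order lower bound of the convex `g` at `u j`, the quadratic upper bound of the `L`-smooth `g`
(where `t ≤ 1/L` enters) and the variational inequality characterising the prox point.
Taking `z = u j` shows that `F (u j)` decreases; taking `z = u*` and summing telescopes to
`k F (u k) ≤ k F u* + ‖u 0 - u*‖² / (2t)`. On `{h < ⊤}` the function `h` is handled through the
real convex function `(h ·).toReal`; if `h u* = ⊤` the bound is trivial. -/

open Set Filter Topology AffineMap

lemma nonneg_of_forall_mem_Ioc_nonneg_add_mul {a b : ℝ}
    (h : ∀ θ ∈ Ioc (0 : ℝ) 1, 0 ≤ a + θ * b) : 0 ≤ a := by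
  have hlim : Tendsto (fun θ : ℝ => a + θ * b) (𝓝[>] 0) (𝓝 a) := by
    have := ((tendsto_id (x := 𝓝 (0 : ℝ))).mul_const b).const_add a
    simpa using this.mono_left nhdsWithin_le_nhds
  refine ge_of_tendsto hlim ?_
  filter_upwards [Ioc_mem_nhdsGT zero_lt_one] with θ hθ using h θ hθ

lemma Antitone.le_add_div_of_le_add_sub {G D : ℕ → ℝ} {c : ℝ} (hG : Antitone G)
    (hD : ∀ j, 0 ≤ D j) (hstep : ∀ j, G j ≤ c + (D j - D (j + 1))) (k : ℕ) :
    G k ≤ c + D 0 / (k + 1) := by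
  have hweighted : ∀ k : ℕ, (k + 1) * G k ≤ (k + 1) * c + (D 0 - D (k + 1)) := by
    intro k
    induction k with
    | zero => simpa using hstep 0
    | succ k ih =>
      have hmono := hG k.le_succ
      have hnext := hstep (k + 1)
      push_cast
      nlinarith [hD (k + 1)]
  rw [← sub_le_iff_le_add', le_div_iff₀ (by positivity)]
  nlinarith [hweighted k, hD (k + 1)]

lemma EReal.ne_top_of_coe_add_le {a b : ℝ} {x y : EReal} (hy : y ≠ ⊤)
    (hle : (a : EReal) + x ≤ b + y) : x ≠ ⊤ := by
  rintro rfl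
  rw [EReal.coe_add_top, top_le_iff] at hle
  exact (EReal.add_lt_top (EReal.coe_ne_top b) hy).ne hle

lemma isMinOn_toReal_setOf_ne_top {E : Type*} {q : E → ℝ} {h : E → EReal} {p : E}
    (hbot : ∀ x, h x ≠ ⊥) (hp : h p ≠ ⊤) (hle : ∀ z, (q p : EReal) + h p ≤ q z + h z) :
    IsMinOn (fun z => q z + (h z).toReal) {x | h x ≠ ⊤} p := by
  intro z hz
  have := hle z
  rwa [← EReal.coe_toReal hp (hbot p), ← EReal.coe_toReal hz (hbot z), ← EReal.coe_add,
    ← EReal.coe_add, EReal.coe_le_coe_iff] at this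

lemma convexOn_toReal_setOf_ne_top {E : Type*} [AddCommGroup E] [Module ℝ E] {h : E → EReal}
    (hbot : ∀ x, h x ≠ ⊥)
    (hconv : ∀ x y, ∀ θ : ℝ, 0 ≤ θ → θ ≤ 1 →
      h (θ • x + (1 - θ) • y) ≤ (θ : EReal) * h x + ((1 - θ : ℝ) : EReal) * h y) :
    ConvexOn ℝ {x | h x ≠ ⊤} (fun x => (h x).toReal) := by
  have hcomb : ∀ x ∈ {x | h x ≠ ⊤}, ∀ y ∈ {x | h x ≠ ⊤}, ∀ θ : ℝ, 0 ≤ θ → θ ≤ 1 →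
      h (θ • x + (1 - θ) • y) ≤ ((θ * (h x).toReal + (1 - θ) * (h y).toReal : ℝ) : EReal) := by
    intro x hx y hy θ hθ₀ hθ₁
    have := hconv x y θ hθ₀ hθ₁
    rwa [← EReal.coe_toReal hx (hbot x), ← EReal.coe_toReal hy (hbot y), ← EReal.coe_mul,
      ← EReal.coe_mul, ← EReal.coe_add] at this
  refine ⟨fun x hx y hy a b ha hb hab => ?_, fun x hx y hy a b ha hb hab => ?_⟩
  all_goals
    obtain rfl : b = 1 - a := by linarith
    have hle := hcomb x hx y hy a ha (by linarith)
  · exact ne_top_of_le_ne_top (EReal.coe_ne_top _) hle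
  · exact (EReal.toReal_le_toReal hle (hbot _) (EReal.coe_ne_top _)).trans_eq
      (EReal.toReal_coe _)

section Prox

variable {E : Type*} [NormedAddCommGroup E] [InnerProductSpace ℝ E]

lemma IsMinOn.add_inner_div_le_of_prox {φ : E → ℝ} {D : Set E} {t : ℝ} {w p z : E}
    (hφ : ConvexOn ℝ D φ) (ht : 0 < t) (hp : p ∈ D)
    (hmin : IsMinOn (fun z => 1 / (2 * t) * ‖w - z‖ ^ 2 + φ z) D p) (hz : z ∈ D) :
    φ p + ⟪w - p, z - p⟫ / t ≤ φ z := by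
  suffices 0 ≤ (φ z - φ p - ⟪w - p, z - p⟫ / t) by linarith
  -- compare the prox objective at `p` with its value at `θ • z + (1 - θ) • p` and let `θ → 0`
  refine nonneg_of_forall_mem_Ioc_nonneg_add_mul (b := ‖z - p‖ ^ 2 / (2 * t)) fun θ hθ => ?_
  have hseg : θ • z + (1 - θ) • p ∈ D := hφ.1 hz hp hθ.1.le (by linarith [hθ.2]) (by ring)
  have hφseg : φ (θ • z + (1 - θ) • p) ≤ θ * φ z + (1 - θ) * φ p :=
    hφ.2 hz hp hθ.1.le (by linarith [hθ.2]) (by ring)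
  have hexp : ‖w - (θ • z + (1 - θ) • p)‖ ^ 2 =
      ‖w - p‖ ^ 2 - 2 * θ * ⟪w - p, z - p⟫ + θ ^ 2 * ‖z - p‖ ^ 2 := by
    rw [show w - (θ • z + (1 - θ) • p) = (w - p) - θ • (z - p) by
      rw [smul_sub, sub_smul, one_smul]; abel, norm_sub_sq_real, real_inner_smul_right,
      norm_smul, mul_pow, Real.norm_eq_abs, sq_abs]
    ring
  have hcmp : 1 / (2 * t) * ‖w - p‖ ^ 2 + φ p ≤
      1 / (2 * t) * ‖w - (θ • z + (1 - θ) • p)‖ ^ 2 + φ (θ • z + (1 - θ) • p) := hmin hseg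
  rw [hexp] at hcmp
  rw [← mul_nonneg_iff_of_pos_left hθ.1]
  have hexpand : θ * (φ z - φ p - ⟪w - p, z - p⟫ / t + θ * (‖z - p‖ ^ 2 / (2 * t))) =
      1 / (2 * t) * (‖w - p‖ ^ 2 - 2 * θ * ⟪w - p, z - p⟫ + θ ^ 2 * ‖z - p‖ ^ 2)
        + (θ * φ z + (1 - θ) * φ p) - (1 / (2 * t) * ‖w - p‖ ^ 2 + φ p) := by
    field_simp
    ring
  rw [hexpand]
  linarith

end Prox

section Smooth

variable {E : Type*} [NormedAddCommGroup E] [InnerProductSpace ℝ E] [CompleteSpace E]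
  {g : E → ℝ}

lemma Differentiable.hasDerivAt_comp_lineMap (hgd : Differentiable ℝ g) (x y : E) (s : ℝ) :
    HasDerivAt (fun s => g (lineMap x y s)) ⟪gradient g (lineMap x y s), y - x⟫ s :=
  (hgd _).hasGradientAt.hasFDerivAt.comp_hasDerivAt s hasDerivAt_lineMap

lemma ConvexOn.add_inner_gradient_le_s18 (hg : ConvexOn ℝ univ g) (hgd : Differentiable ℝ g)
    (x y : E) : g x + ⟪gradient g x, y - x⟫ ≤ g y := by
  have hline : ConvexOn ℝ univ (fun s => g (lineMap x y s)) := hg.comp_affineMap (lineMap x y)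
  have hderiv := hgd.hasDerivAt_comp_lineMap x y 0
  have := hline.le_slope_of_hasDerivAt (mem_univ 0) (mem_univ 1) zero_lt_one hderiv
  simp only [lineMap_apply_zero, slope_def_field, lineMap_apply_one, sub_zero, div_one] at this
  linarith

lemma le_add_inner_gradient_add_sq {L : ℝ} (hgd : Differentiable ℝ g)
    (hglip : ∀ x y, ‖gradient g x - gradient g y‖ ≤ L * ‖x - y‖) (x y : E) :
    g y ≤ g x + ⟪gradient g x, y - x⟫ + L / 2 * ‖y - x‖ ^ 2 := by
  set ψ : ℝ → ℝ := fun s =>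
    g (lineMap x y s) - s * ⟪gradient g x, y - x⟫ - L / 2 * ‖y - x‖ ^ 2 * s ^ 2
  have hderiv : ∀ s, HasDerivAt ψ
      (⟪gradient g (lineMap x y s), y - x⟫ - ⟪gradient g x, y - x⟫ - L * ‖y - x‖ ^ 2 * s) s := by
    intro s
    refine (((hgd.hasDerivAt_comp_lineMap x y s).sub
      ((hasDerivAt_id' s).mul_const ⟪gradient g x, y - x⟫)).sub
      ((hasDerivAt_pow 2 s).const_mul (L / 2 * ‖y - x‖ ^ 2))).congr_deriv ?_
    norm_num
    ring
  have hderiv_nonpos : ∀ s ∈ interior (Ici (0 : ℝ)),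
      ⟪gradient g (lineMap x y s), y - x⟫ - ⟪gradient g x, y - x⟫ - L * ‖y - x‖ ^ 2 * s ≤ 0 := by
    intro s hs
    rw [interior_Ici, mem_Ioi] at hs
    have hlip := hglip (lineMap x y s) x
    rw [← vsub_eq_sub (lineMap x y s), lineMap_vsub_left, vsub_eq_sub, norm_smul,
      Real.norm_of_nonneg hs.le] at hlip
    rw [sub_nonpos]
    calc ⟪gradient g (lineMap x y s), y - x⟫ - ⟪gradient g x, y - x⟫
        = ⟪gradient g (lineMap x y s) - gradient g x, y - x⟫ := (inner_sub_left _ _ _).symm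
      _ ≤ ‖gradient g (lineMap x y s) - gradient g x‖ * ‖y - x‖ := real_inner_le_norm _ _
      _ ≤ L * (s * ‖y - x‖) * ‖y - x‖ := by gcongr
      _ = L * ‖y - x‖ ^ 2 * s := by ring
  have hanti := antitoneOn_of_hasDerivWithinAt_nonpos (convex_Ici 0)
    (continuous_iff_continuousAt.2 fun s => (hderiv s).continuousAt).continuousOn
    (fun s _ => (hderiv s).hasDerivWithinAt) hderiv_nonpos
  have := hanti (mem_Ici.2 le_rfl) (mem_Ici.2 zero_le_one) zero_le_one
  simp only [ψ, lineMap_apply_zero, lineMap_apply_one] at this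
  linarith

lemma prox_gradient_step_le {φ : E → ℝ} {D : Set E} {L t : ℝ} {x p z : E}
    (hg : ConvexOn ℝ univ g) (hgd : Differentiable ℝ g)
    (hglip : ∀ x y, ‖gradient g x - gradient g y‖ ≤ L * ‖x - y‖) (ht : 0 < t) (hLt : L * t ≤ 1)
    (hφ : ConvexOn ℝ D φ) (hp : p ∈ D)
    (hmin : IsMinOn (fun z => 1 / (2 * t) * ‖x - t • gradient g x - z‖ ^ 2 + φ z) D p)
    (hz : z ∈ D) :
    g p + φ p ≤ g z + φ z + (‖x - z‖ ^ 2 - ‖p - z‖ ^ 2) / (2 * t) := by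
  have hlower := hg.add_inner_gradient_le_s18 hgd x z
  have hupper := le_add_inner_gradient_add_sq hgd hglip x p
  have hprox := hmin.add_inner_div_le_of_prox hφ ht hp hz
  have hprox_inner : ⟪x - t • gradient g x - p, z - p⟫ / t =
      ⟪x - p, z - p⟫ / t - ⟪gradient g x, z - p⟫ := by
    rw [sub_right_comm, inner_sub_left, real_inner_smul_left]
    field_simp
  have hinner_split : ⟪gradient g x, p - x⟫ + ⟪gradient g x, z - p⟫ = ⟪gradient g x, z - x⟫ := by
    rw [← inner_add_right, sub_add_sub_cancel']
  have hsq : (‖x - z‖ ^ 2 - ‖p - z‖ ^ 2) / (2 * t) =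
      ‖p - x‖ ^ 2 / (2 * t) - ⟪x - p, z - p⟫ / t := by
    rw [show x - z = (x - p) - (z - p) by abel, norm_sub_sq_real, norm_sub_rev x p,
      norm_sub_rev z p]
    field_simp
    ring
  have hstep_size : L / 2 * ‖p - x‖ ^ 2 ≤ ‖p - x‖ ^ 2 / (2 * t) := by
    rw [le_div_iff₀ (by positivity)]
    nlinarith [sq_nonneg ‖p - x‖]
  linarith

end Smooth

theorem proximal_gradient_convergence_general {n : ℕ}
    (g : EuclideanSpace ℝ (Fin n) → ℝ)
    (h : EuclideanSpace ℝ (Fin n) → EReal) (L t : ℝ)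
    (hgconv : ConvexOn ℝ Set.univ g) (hgdiff : Differentiable ℝ g)
    (hglip : ∀ x y, ‖gradient g x - gradient g y‖ ≤ L * ‖x - y‖)
    (hbot : ∀ x, h x ≠ ⊥)
    (hconv : ∀ x y, ∀ θ : ℝ, 0 ≤ θ → θ ≤ 1 →
      h (θ • x + (1 - θ) • y) ≤ (θ : EReal) * h x + ((1 - θ : ℝ) : EReal) * h y)
    (ht : 0 < t) (ht' : t ≤ 1 / L)
    (u : ℕ → EuclideanSpace ℝ (Fin n))
    (hstep : ∀ k, ∀ z,
      ((1 / (2 * t) * ‖u k - t • gradient g (u k) - u (k + 1)‖ ^ 2 : ℝ) : EReal)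
          + h (u (k + 1)) ≤
        ((1 / (2 * t) * ‖u k - t • gradient g (u k) - z‖ ^ 2 : ℝ) : EReal) + h z)
    (ustar : EuclideanSpace ℝ (Fin n))
    (k : ℕ) (hk : 0 < k) :
    (g (u k) : EReal) + h (u k) ≤ (g ustar : EReal) + h ustar +
      ((‖u 0 - ustar‖ ^ 2 / (2 * t * k) : ℝ) : EReal) := by
  by_cases hstar : h ustar = ⊤
  · simp [hstar]
  have hLt : L * t ≤ 1 := by
    rwa [le_div_iff₀ (one_div_pos.mp (ht.trans_le ht')), mul_comm] at ht'
  have hmem : ∀ j, h (u (j + 1)) ≠ ⊤ := fun j => EReal.ne_top_of_coe_add_le hstar (hstep j ustar)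
  have hthree_point := fun j z (hz : h z ≠ ⊤) => prox_gradient_step_le hgconv hgdiff hglip ht hLt
    (convexOn_toReal_setOf_ne_top hbot hconv) (hmem j)
    (isMinOn_toReal_setOf_ne_top hbot (hmem j) (hstep j)) hz
  have hanti : Antitone fun j => g (u (j + 1)) + (h (u (j + 1))).toReal :=
    antitone_nat_of_succ_le fun j => by
      have := hthree_point (j + 1) (u (j + 1)) (hmem j)
      rw [sub_self, norm_zero, zero_pow two_ne_zero, zero_sub, neg_div] at this
      linarith [div_nonneg (sq_nonneg ‖u (j + 1 + 1) - u (j + 1)‖) (by positivity : 0 ≤ 2 * t)]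
  obtain ⟨j, rfl⟩ := Nat.exists_eq_add_one_of_ne_zero hk.ne'
  have hbound := hanti.le_add_div_of_le_add_sub (D := fun j => ‖u j - ustar‖ ^ 2 / (2 * t))
    (c := g ustar + (h ustar).toReal) (fun _ => by positivity)
    (fun j => by simpa only [sub_div, add_assoc] using hthree_point j ustar hstar) j
  rw [← EReal.coe_toReal (hmem j) (hbot _), ← EReal.coe_toReal hstar (hbot _)]
  norm_cast
  convert hbound using 2
  push_cast
  field_simp

theorem proximal_gradient_convergence {n : ℕ}
    (g : EuclideanSpace ℝ (Fin n) → ℝ)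
    (h : EuclideanSpace ℝ (Fin n) → EReal) (L t : ℝ)
    (hL : 0 < L) (hgconv : ConvexOn ℝ Set.univ g) (hgdiff : Differentiable ℝ g)
    (hglip : ∀ x y, ‖gradient g x - gradient g y‖ ≤ L * ‖x - y‖)
    (hbot : ∀ x, h x ≠ ⊥) (hproper : ∃ x, h x ≠ ⊤)
    (hlsc : LowerSemicontinuous h)
    (hconv : ∀ x y, ∀ θ : ℝ, 0 ≤ θ → θ ≤ 1 →
      h (θ • x + (1 - θ) • y) ≤ (θ : EReal) * h x + ((1 - θ : ℝ) : EReal) * h y)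
    (ht : 0 < t) (ht' : t ≤ 1 / L)
    (u : ℕ → EuclideanSpace ℝ (Fin n))
    (hstep : ∀ k, ∀ z,
      ((1 / (2 * t) * ‖u k - t • gradient g (u k) - u (k + 1)‖ ^ 2 : ℝ) : EReal)
          + h (u (k + 1)) ≤
        ((1 / (2 * t) * ‖u k - t • gradient g (u k) - z‖ ^ 2 : ℝ) : EReal) + h z)
    (ustar : EuclideanSpace ℝ (Fin n))
    (hmin : ∀ v, (g ustar : EReal) + h ustar ≤ (g v : EReal) + h v)
    (k : ℕ) (hk : 0 < k) :
    (g (u k) : EReal) + h (u k) ≤ (g ustar : EReal) + h ustar +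
      ((‖u 0 - ustar‖ ^ 2 / (2 * t * k) : ℝ) : EReal) :=
  proximal_gradient_convergence_general g h L t hgconv hgdiff hglip hbot hconv ht ht' u hstep ustar
    k hk
end
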